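/- Let α be an equivalence relation on X ⊕ Y and β an equivalence relation on Y ⊕ Z (X, Y, Z finite sets), regarded as PBRs Ψ(α) on (X,Y) and Ψ(β) on (Y,Z). Let Y' ⊆ Y be the set of y ∈ Y for which there is no finite sequence y = a₁, a₂, …, a_p of elements of X ⊕ Y ⊕ Z with a_p ∈ X ⊕ Z such that every two consecutive elements are related by α or by β. For y₁, y₂ ∈ Y' set y₁ ∼ y₂ if and only if there is a finite sequence y₁ = a₁, …, a_p = y₂ with all a_i ∈ Y such that every two consecutive elements are related by α or by β; then ∼ is an equivalence relation on Y', and 𝔭(α,β) denotes the number of its equivalence classes. Then 𝔭(α,β) = 𝔣((Ψ(α),Ψ(β))). Consequently, the map (α,k) ↦ (Ψ(α),k) from the deformed partition category to the deformed category of PBRs respects the deformed compositions. -/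

import Mathlib

/-!
Because `α` and `β` are equivalence relations, two consecutive edges of a walk taken in the same
relation merge into one edge, so every walk in `X ⊕ Y ⊕ Z` between distinct vertices shortens to
a connected sequence; this gives `partComp β α = comp β α`. The same freedom shows that an edge
is frothy exactly when its source cannot reach `X ⊕ Z`: otherwise the edge extends in both
directions to `X ⊕ Z`, inserting at a vertex of `Y` a loop of the other relation wherever two
edges of the same relation would meet.

Hence a frothy cycle only visits `Y'` and its vertices are pairwise `∼`-related, while every
`y ∈ Y'` carries the frothy cycle made of the loops at `y` in `α` and in `β`. An edge between `y`
and `y'` in `Y'` spans the square cycle `y → y' → y' → y → y`, which shares an edge with the loop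
cycles at `y` and at `y'` and with every frothy cycle through that edge. So sending `y` to its
loop cycle is a bijection from `∼`-classes to classes of frothy cycles, and `𝔭 = 𝔣`.
-/

namespace PBRPaper

/-- A partitioned binary relation (PBR) on `(X, Y)`: a binary relation on
the disjoint union `X ⊕ Y`. -/
abbrev PBR (X Y : Type) : Type := Set ((X ⊕ Y) × (X ⊕ Y))

variable {X Y Z : Type}

/-- The inclusion of `X ⊕ Y` into `X ⊕ Y ⊕ Z`. -/
def ι₁ : X ⊕ Y → X ⊕ Y ⊕ Z := Sum.elim Sum.inl fun y => Sum.inr (Sum.inl y)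

/-- The inclusion of `Y ⊕ Z` into `X ⊕ Y ⊕ Z`. -/
def ι₂ : Y ⊕ Z → X ⊕ Y ⊕ Z :=
  Sum.elim (fun y => Sum.inr (Sum.inl y)) fun z => Sum.inr (Sum.inr z)

/-- The inclusion of `X ⊕ Z` into `X ⊕ Y ⊕ Z`. -/
def ι₀ : X ⊕ Z → X ⊕ Y ⊕ Z := Sum.elim Sum.inl fun z => Sum.inr (Sum.inr z)

/-- Labeled edges in the ambient `X ⊕ Y ⊕ Z`: label `false` means
"an edge of `α`", label `true` means "an edge of `β`". -/
def EdgeMem (α : PBR X Y) (β : PBR Y Z)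
    (e : Bool × (X ⊕ Y ⊕ Z) × (X ⊕ Y ⊕ Z)) : Prop :=
  if e.1 then ∃ p ∈ β, ι₂ p.1 = e.2.1 ∧ ι₂ p.2 = e.2.2
  else ∃ p ∈ α, ι₁ p.1 = e.2.1 ∧ ι₁ p.2 = e.2.2

/-- An `(α,β)`-connected sequence: a nonempty list of labeled edges of `α`/`β`,
no two successive edges from the same PBR, endpoints matching up. -/
def IsConnSeq (α : PBR X Y) (β : PBR Y Z)
    (L : List (Bool × (X ⊕ Y ⊕ Z) × (X ⊕ Y ⊕ Z))) : Prop :=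
  L ≠ [] ∧ (∀ e ∈ L, EdgeMem α β e) ∧
    L.Chain' fun e f => e.1 ≠ f.1 ∧ e.2.2 = f.2.1

/-- `L` is an `(α,β)`-connected sequence connecting `a` to `b`. -/
def ConnectsVia (α : PBR X Y) (β : PBR Y Z)
    (L : List (Bool × (X ⊕ Y ⊕ Z) × (X ⊕ Y ⊕ Z))) (a b : X ⊕ Z) : Prop :=
  IsConnSeq α β L ∧ L.head?.map (fun e => e.2.1) = some (ι₀ a) ∧
    L.getLast?.map (fun e => e.2.2) = some (ι₀ b)

/-- Composition of partitioned binary relations. -/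
def comp (β : PBR Y Z) (α : PBR X Y) : PBR X Z :=
  {p | ∃ L, ConnectsVia α β L p.1 p.2}

/-- The identity PBR `ε_X`, consisting of all edges `(x^(d), x^(c))`
and `(x^(c), x^(d))`. -/
def eps (X : Type) : PBR X X :=
  {p | ∃ x : X, p = (Sum.inl x, Sum.inr x) ∨ p = (Sum.inr x, Sum.inl x)}

/-- A labeled edge is `(α,β)`-frothy if it is an edge of the corresponding PBR
occurring in no `(α,β)`-connected sequence connecting two elements of `X ⊕ Z`. -/
def IsFrothy (α : PBR X Y) (β : PBR Y Z)
    (e : Bool × (X ⊕ Y ⊕ Z) × (X ⊕ Y ⊕ Z)) : Prop :=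
  EdgeMem α β e ∧ ∀ L a b, ConnectsVia α β L a b → e ∉ L

/-- An `(α,β)`-frothy cycle. -/
def IsFrothyCycle (α : PBR X Y) (β : PBR Y Z)
    (L : List (Bool × (X ⊕ Y ⊕ Z) × (X ⊕ Y ⊕ Z))) : Prop :=
  IsConnSeq α β L ∧ 2 ≤ L.length ∧
    L.getLast?.map (fun e => e.2.2) = L.head?.map (fun e => e.2.1) ∧
    L.head?.map (fun e => e.1) ≠ L.getLast?.map (fun e => e.1) ∧
    ∀ e ∈ L, IsFrothy α β e

/-- The type of `(α,β)`-frothy cycles. -/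
def FrothyCycles (α : PBR X Y) (β : PBR Y Z) :=
  {L : List (Bool × (X ⊕ Y ⊕ Z) × (X ⊕ Y ⊕ Z)) // IsFrothyCycle α β L}

/-- `𝔣((α,β))`: the number of equivalence classes of `(α,β)`-frothy cycles,
where the equivalence is generated by elementary equivalence (sharing a common
edge of the same PBR); note that naive equivalence (cyclic permutation) is
subsumed, since a cycle and any of its cyclic permutations share all edges. -/
noncomputable def fPBR (α : PBR X Y) (β : PBR Y Z) : ℕ :=
  Nat.card (Quot fun L L' : FrothyCycles α β => ∃ e, e ∈ L.1 ∧ e ∈ L'.1)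

variable {X Y Z : Type} in
/-- Two elements of `X ⊕ Y ⊕ Z` are related by `α` or by `β`
(each regarded inside `X ⊕ Y ⊕ Z`). -/
def step (α : PBR X Y) (β : PBR Y Z) (u v : X ⊕ Y ⊕ Z) : Prop :=
  (∃ p ∈ α, ι₁ p.1 = u ∧ ι₁ p.2 = v) ∨ (∃ p ∈ β, ι₂ p.1 = u ∧ ι₂ p.2 = v)

variable {X Y Z : Type} in
/-- The set `Y'` of elements `y ∈ Y` admitting no finite sequence
`y = a₁, …, a_p` in `X ⊕ Y ⊕ Z` with `a_p ∈ X ⊕ Z` whose consecutive members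
are related by `α` or by `β`. -/
def Yprime (α : PBR X Y) (β : PBR Y Z) : Set Y :=
  {y | ¬ ∃ (k : ℕ) (c : Fin (k + 1) → X ⊕ Y ⊕ Z),
        c 0 = Sum.inr (Sum.inl y) ∧ (∃ w : X ⊕ Z, c (Fin.last k) = ι₀ w) ∧
        ∀ i : Fin k, step α β (c i.castSucc) (c i.succ)}

variable {X Y Z : Type} in
/-- `y₁ ∼ y₂`: there is a finite sequence `y₁ = a₁, …, a_p = y₂` with all
members in `Y` whose consecutive members are related by `α` or by `β`. -/
def simRel (α : PBR X Y) (β : PBR Y Z) (y₁ y₂ : Y) : Prop :=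
  ∃ (k : ℕ) (c : Fin (k + 1) → Y), c 0 = y₁ ∧ c (Fin.last k) = y₂ ∧
    ∀ i : Fin k, (Sum.inr (c i.castSucc), Sum.inr (c i.succ)) ∈ α ∨
      (Sum.inl (c i.castSucc), Sum.inl (c i.succ)) ∈ β

variable {X Y Z : Type} in
/-- `𝔭(α,β)`: the number of equivalence classes of `∼` on `Y'`. -/
noncomputable def pPart (α : PBR X Y) (β : PBR Y Z) : ℕ :=
  Nat.card (Quot fun y₁ y₂ : {y : Y // y ∈ Yprime α β} => simRel α β y₁.1 y₂.1)

variable {X Y Z : Type} in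
/-- The composition in the partition category, regarded via equivalence
relations: `(a,b)` lie in `β∘α` iff they are joined by a finite sequence in
`X ⊕ Y ⊕ Z` whose consecutive members are related by `α` or by `β`. -/
def partComp (β : PBR Y Z) (α : PBR X Y) : Set ((X ⊕ Z) × (X ⊕ Z)) :=
  {p | ∃ (k : ℕ) (c : Fin (k + 1) → X ⊕ Y ⊕ Z),
        c 0 = ι₀ p.1 ∧ c (Fin.last k) = ι₀ p.2 ∧
        ∀ i : Fin k, step α β (c i.castSucc) (c i.succ)}

end PBRPaper

theorem Relation.reflTransGen_iff_exists_fin_chain {V : Type*} {r : V → V → Prop} {u v : V} :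
    Relation.ReflTransGen r u v ↔ ∃ (k : ℕ) (c : Fin (k + 1) → V), c 0 = u ∧
      c (Fin.last k) = v ∧ ∀ i : Fin k, r (c i.castSucc) (c i.succ) := by
  constructor
  · intro h
    induction h with
    | refl => exact ⟨0, fun _ => u, rfl, rfl, fun i => i.elim0⟩
    | @tail b w _ hbw ih =>
      obtain ⟨k, c, h0, hl, hc⟩ := ih
      refine ⟨k + 1, Fin.snoc c w, by simpa using h0, by simp, Fin.lastCases ?_ fun i => ?_⟩
      · simpa [hl] using hbw
      · rw [Fin.succ_castSucc, Fin.snoc_castSucc, Fin.snoc_castSucc]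
        exact hc i
  · rintro ⟨k, c, rfl, rfl, hc⟩
    induction k with
    | zero => rfl
    | succ k ih =>
      exact (ih (fun i => c i.castSucc) fun i => hc i.castSucc).tail (hc (Fin.last k))

theorem Nat.card_quot_eq_of_maps {A B : Type*} {r : A → A → Prop} {s : B → B → Prop}
    (f : A → B) (g : B → A)
    (hf : ∀ a a', r a a' → Quot.mk s (f a) = Quot.mk s (f a'))
    (hg : ∀ b b', s b b' → Quot.mk r (g b) = Quot.mk r (g b'))
    (hgf : ∀ a, Quot.mk r (g (f a)) = Quot.mk r a)
    (hfg : ∀ b, Quot.mk s (f (g b)) = Quot.mk s b) :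
    Nat.card (Quot r) = Nat.card (Quot s) :=
  Nat.card_congr
    { toFun := Quot.lift (fun a => Quot.mk s (f a)) hf
      invFun := Quot.lift (fun b => Quot.mk r (g b)) hg
      left_inv := Quot.ind hgf
      right_inv := Quot.ind hfg }

namespace PBRPaper

variable {X Y Z : Type} {α : PBR X Y} {β : PBR Y Z}

abbrev Edge (X Y Z : Type) : Type := Bool × (X ⊕ Y ⊕ Z) × (X ⊕ Y ⊕ Z)

abbrev ιY (y : Y) : X ⊕ Y ⊕ Z := Sum.inr (Sum.inl y)

def ReachesBoundary (α : PBR X Y) (β : PBR Y Z) (u : X ⊕ Y ⊕ Z) : Prop :=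
  ∃ w : X ⊕ Z, Relation.ReflTransGen (step α β) u (ι₀ w)

def stepY (α : PBR X Y) (β : PBR Y Z) (y y' : Y) : Prop :=
  (Sum.inr y, Sum.inr y') ∈ α ∨ (Sum.inl y, Sum.inl y') ∈ β

theorem ι₀_injective : Function.Injective (ι₀ : X ⊕ Z → X ⊕ Y ⊕ Z) := by
  rintro (a | a) (b | b) h <;> simp_all [ι₀]

theorem ι₁_injective : Function.Injective (ι₁ : X ⊕ Y → X ⊕ Y ⊕ Z) := by
  rintro (a | a) (b | b) h <;> simp_all [ι₁]

theorem ι₂_injective : Function.Injective (ι₂ : Y ⊕ Z → X ⊕ Y ⊕ Z) := by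
  rintro (a | a) (b | b) h <;> simp_all [ι₂]

theorem eq_ι₀_or_eq_ιY (u : X ⊕ Y ⊕ Z) : (∃ w : X ⊕ Z, u = ι₀ w) ∨ ∃ y : Y, u = ιY y := by
  rcases u with x | y | z
  exacts [Or.inl ⟨.inl x, rfl⟩, Or.inr ⟨y, rfl⟩, Or.inl ⟨.inr z, rfl⟩]

theorem ιY_ne_ι₀ (y : Y) (w : X ⊕ Z) : (ιY y : X ⊕ Y ⊕ Z) ≠ ι₀ w := by
  cases w <;> simp [ι₀]

theorem step_ιY_iff {y y' : Y} : step α β (ιY y) (ιY y') ↔ stepY α β y y' := by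
  constructor
  · rintro (⟨⟨a, b⟩, h, ha, hb⟩ | ⟨⟨a, b⟩, h, ha, hb⟩)
    · rcases a with a | a <;> rcases b with b | b <;> simp_all [ι₁, stepY]
    · rcases a with a | a <;> rcases b with b | b <;> simp_all [ι₂, stepY]
  · rintro (h | h)
    exacts [Or.inl ⟨_, h, rfl, rfl⟩, Or.inr ⟨_, h, rfl, rfl⟩]

theorem step_iff_exists_edgeMem {u v : X ⊕ Y ⊕ Z} :
    step α β u v ↔ ∃ lab, EdgeMem α β (lab, u, v) := by
  simp only [step, EdgeMem, Bool.exists_bool, Bool.false_eq_true, if_false, if_true]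

theorem simRel_iff_reflTransGen {y y' : Y} :
    simRel α β y y' ↔ Relation.ReflTransGen (stepY α β) y y' := by
  rw [simRel, Relation.reflTransGen_iff_exists_fin_chain]
  rfl

theorem ReachesBoundary.of_reflTransGen {u v : X ⊕ Y ⊕ Z}
    (h : Relation.ReflTransGen (step α β) u v) (hv : ReachesBoundary α β v) :
    ReachesBoundary α β u :=
  let ⟨w, hw⟩ := hv
  ⟨w, h.trans hw⟩

theorem reachesBoundary_ι₀ (w : X ⊕ Z) : ReachesBoundary α β (ι₀ w) := ⟨w, .refl⟩

theorem mem_Yprime_iff {y : Y} : y ∈ Yprime α β ↔ ¬ ReachesBoundary α β (ιY y) := by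
  simp only [Yprime, ReachesBoundary, Relation.reflTransGen_iff_exists_fin_chain,
    Set.mem_ofPred_eq]
  constructor
  · rintro h ⟨w, k, c, h0, hl, hc⟩
    exact h ⟨k, c, h0, ⟨w, hl⟩, hc⟩
  · rintro h ⟨k, c, h0, ⟨w, hl⟩, hc⟩
    exact h ⟨w, k, c, h0, hl, hc⟩

theorem exists_mem_Yprime_of_not_reachesBoundary {u : X ⊕ Y ⊕ Z}
    (h : ¬ ReachesBoundary α β u) : ∃ y ∈ Yprime α β, u = ιY y := by
  rcases eq_ι₀_or_eq_ιY u with ⟨w, rfl⟩ | ⟨y, rfl⟩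
  · exact absurd (reachesBoundary_ι₀ w) h
  · exact ⟨y, mem_Yprime_iff.mpr h, rfl⟩

theorem mem_Yprime_of_reflTransGen {y y' : Y} (h : Relation.ReflTransGen (stepY α β) y y')
    (hy : y ∈ Yprime α β) : y' ∈ Yprime α β := by
  rw [mem_Yprime_iff] at hy ⊢
  exact fun hy' => hy (.of_reflTransGen (h.lift ιY fun _ _ => step_ιY_iff.mpr) hy')

theorem exists_reflTransGen_stepY {y : Y} {v : X ⊕ Y ⊕ Z} (hy : ¬ ReachesBoundary α β (ιY y))
    (h : Relation.ReflTransGen (step α β) (ιY y) v) :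
    ∃ y', v = ιY y' ∧ Relation.ReflTransGen (stepY α β) y y' := by
  induction h with
  | refl => exact ⟨y, rfl, .refl⟩
  | tail hyb hbc ih =>
    obtain ⟨y', rfl, hyy'⟩ := ih
    obtain ⟨y'', -, rfl⟩ := exists_mem_Yprime_of_not_reachesBoundary fun hc =>
      hy (.of_reflTransGen (hyb.tail hbc) hc)
    exact ⟨y'', rfl, hyy'.tail (step_ιY_iff.mp hbc)⟩

theorem isConnSeq_iff {L : List (Edge X Y Z)} :
    IsConnSeq α β L ↔ L ≠ [] ∧ (∀ e ∈ L, EdgeMem α β e) ∧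
      L.IsChain fun e f => e.1 ≠ f.1 ∧ e.2.2 = f.2.1 :=
  Iff.rfl

-- `ConnectsVia α β L a b` unfolds to `Joins α β L (ι₀ a) (ι₀ b)`.
def Joins (α : PBR X Y) (β : PBR Y Z) (L : List (Edge X Y Z)) (u v : X ⊕ Y ⊕ Z) : Prop :=
  IsConnSeq α β L ∧ L.head?.map (fun e => e.2.1) = some u ∧
    L.getLast?.map (fun e => e.2.2) = some v

theorem joins_singleton_iff {e : Edge X Y Z} {u v : X ⊕ Y ⊕ Z} :
    Joins α β [e] u v ↔ EdgeMem α β e ∧ e.2.1 = u ∧ e.2.2 = v := by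
  simp [Joins, isConnSeq_iff, and_comm]

theorem joins_cons_cons_iff {e f : Edge X Y Z} {M : List (Edge X Y Z)} {u w : X ⊕ Y ⊕ Z} :
    Joins α β (e :: f :: M) u w ↔
      EdgeMem α β e ∧ e.1 ≠ f.1 ∧ e.2.1 = u ∧ Joins α β (f :: M) e.2.2 w := by
  simp only [Joins, isConnSeq_iff, List.isChain_cons_cons, List.forall_mem_cons,
    List.head?_cons, List.getLast?_cons_cons, Option.map_some, Option.some.injEq, ne_eq,
    reduceCtorEq, not_false_eq_true, true_and]
  constructor
  · rintro ⟨⟨⟨he, hf, hM⟩, ⟨hlab, hef⟩, hch⟩, hu, hw⟩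
    exact ⟨he, hlab, hu, ⟨⟨hf, hM⟩, hch⟩, hef.symm, hw⟩
  · rintro ⟨he, hlab, hu, ⟨⟨hf, hM⟩, hch⟩, hef, hw⟩
    exact ⟨⟨⟨he, hf, hM⟩, ⟨hlab, hef.symm⟩, hch⟩, hu, hw⟩

theorem Joins.source_head {f : Edge X Y Z} {M : List (Edge X Y Z)} {u w : X ⊕ Y ⊕ Z}
    (h : Joins α β (f :: M) u w) : f.2.1 = u := by
  simpa using h.2.1

theorem Joins.reflTransGen_of_mem {L : List (Edge X Y Z)} {u v : X ⊕ Y ⊕ Z}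
    (h : Joins α β L u v) {e : Edge X Y Z} (he : e ∈ L) :
    Relation.ReflTransGen (step α β) e.2.1 v := by
  induction L generalizing u e with
  | nil => simp at he
  | cons f M ih =>
    cases M with
    | nil =>
      obtain ⟨hf, -, rfl⟩ := joins_singleton_iff.mp h
      obtain rfl := List.mem_singleton.mp he
      exact .single (step_iff_exists_edgeMem.mpr ⟨_, hf⟩)
    | cons g N =>
      obtain ⟨hf, -, -, hM⟩ := joins_cons_cons_iff.mp h
      rcases List.mem_cons.mp he with rfl | he
      · exact .head (step_iff_exists_edgeMem.mpr ⟨_, hf⟩) (hM.source_head ▸ ih hM (by simp))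
      · exact ih hM he

theorem Joins.reflTransGen {L : List (Edge X Y Z)} {u v : X ⊕ Y ⊕ Z} (h : Joins α β L u v) :
    Relation.ReflTransGen (step α β) u v := by
  obtain ⟨f, M, rfl⟩ := List.exists_cons_of_ne_nil h.1.1
  exact h.source_head ▸ h.reflTransGen_of_mem (List.mem_cons_self ..)

theorem Joins.append {P Q : List (Edge X Y Z)} {u v w : X ⊕ Y ⊕ Z}
    (hP : Joins α β P u v) (hQ : Joins α β Q v w)
    (hlab : ∀ p ∈ P.getLast?, ∀ q ∈ Q.head?, p.1 ≠ q.1) : Joins α β (P ++ Q) u w := by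
  obtain ⟨hP, hPh, hPl⟩ := hP
  obtain ⟨hQ, hQh, hQl⟩ := hQ
  obtain ⟨hPne, hPmem, hPch⟩ := isConnSeq_iff.mp hP
  obtain ⟨hQne, hQmem, hQch⟩ := isConnSeq_iff.mp hQ
  refine ⟨isConnSeq_iff.mpr ⟨by simp [hPne], fun x hx => ?_, ?_⟩, ?_, ?_⟩
  · rcases List.mem_append.mp hx with h | h
    exacts [hPmem x h, hQmem x h]
  · refine List.isChain_append.mpr ⟨hPch, hQch, fun p hp q hq => ⟨hlab p hp q hq, ?_⟩⟩
    rw [Option.mem_def] at hp hq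
    simp_all
  · obtain ⟨p, P', rfl⟩ := List.exists_cons_of_ne_nil hPne
    simpa using hPh
  · rwa [List.getLast?_append_of_ne_nil P hQne]

theorem Joins.append_cons {P Q : List (Edge X Y Z)} {e : Edge X Y Z} {a u v b : X ⊕ Y ⊕ Z}
    (hP : Joins α β (P ++ [e]) a v) (hQ : Joins α β (e :: Q) u b) :
    Joins α β (P ++ e :: Q) a b := by
  have hv : e.2.2 = v := by simpa using hP.2.2
  cases Q with
  | nil => simpa [← (joins_singleton_iff.mp hQ).2.2, ← hv] using hP
  | cons q Q =>
    obtain ⟨-, hlab, -, hQ⟩ := joins_cons_cons_iff.mp hQ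
    simpa using hP.append (hv ▸ hQ) (by simpa using hlab)

def loopCycle (y : Y) : List (Edge X Y Z) :=
  [(false, ιY y, ιY y), (true, ιY y, ιY y)]

def squareCycle (lab : Bool) (y y' : Y) : List (Edge X Y Z) :=
  [(lab, ιY y, ιY y'), (!lab, ιY y', ιY y'), (lab, ιY y', ιY y), (!lab, ιY y, ιY y)]

theorem mem_loopCycle (lab : Bool) (y : Y) :
    (lab, ιY y, ιY y) ∈ (loopCycle y : List (Edge X Y Z)) := by
  cases lab <;> simp [loopCycle]

def SharesEdge (α : PBR X Y) (β : PBR Y Z) (L L' : FrothyCycles α β) : Prop :=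
  ∃ e, e ∈ L.1 ∧ e ∈ L'.1

abbrev frothyClass (L : List (Edge X Y Z)) (hL : IsFrothyCycle α β L) : Quot (SharesEdge α β) :=
  Quot.mk _ ⟨L, hL⟩

theorem frothyClass_eq_of_mem {L L' : List (Edge X Y Z)} {hL : IsFrothyCycle α β L}
    {hL' : IsFrothyCycle α β L'} {e : Edge X Y Z} (he : e ∈ L) (he' : e ∈ L') :
    frothyClass L hL = frothyClass L' hL' :=
  Quot.sound ⟨e, he, he'⟩

theorem IsFrothyCycle.exists_joins {L : List (Edge X Y Z)} (h : IsFrothyCycle α β L) :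
    ∃ u, Joins α β L u u := by
  obtain ⟨f, M, rfl⟩ := List.exists_cons_of_ne_nil h.1.1
  exact ⟨f.2.1, h.1, by simp, by simpa using h.2.2.1⟩

section Equivalences

variable (hα : Equivalence fun a b : X ⊕ Y => (a, b) ∈ α)
    (hβ : Equivalence fun a b : Y ⊕ Z => (a, b) ∈ β)
include hα hβ

theorem step_symm {u v : X ⊕ Y ⊕ Z} (h : step α β u v) : step α β v u := by
  rcases h with ⟨p, hp, h1, h2⟩ | ⟨p, hp, h1, h2⟩
  exacts [Or.inl ⟨p.swap, hα.symm hp, h2, h1⟩, Or.inr ⟨p.swap, hβ.symm hp, h2, h1⟩]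

theorem equivalence_simRel : Equivalence (simRel α β) := by
  have : Std.Symm (stepY α β) := ⟨fun _ _ => Or.imp (fun h => hα.symm h) (fun h => hβ.symm h)⟩
  have hsimRel : simRel α β = Relation.ReflTransGen (stepY α β) := by
    ext y y'
    exact simRel_iff_reflTransGen
  rw [hsimRel]
  exact ⟨fun _ => .refl, symm_of _, .trans⟩

theorem EdgeMem.symm {lab : Bool} {u v : X ⊕ Y ⊕ Z} (h : EdgeMem α β (lab, u, v)) :
    EdgeMem α β (lab, v, u) := by
  cases lab <;> simp only [EdgeMem, Bool.false_eq_true, if_false, if_true] at h ⊢ <;>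
    obtain ⟨p, hp, rfl, rfl⟩ := h
  exacts [⟨p.swap, hα.symm hp, rfl, rfl⟩, ⟨p.swap, hβ.symm hp, rfl, rfl⟩]

theorem EdgeMem.trans {lab : Bool} {u v w : X ⊕ Y ⊕ Z} (h : EdgeMem α β (lab, u, v))
    (h' : EdgeMem α β (lab, v, w)) : EdgeMem α β (lab, u, w) := by
  cases lab <;> simp only [EdgeMem, Bool.false_eq_true, if_false, if_true] at h h' ⊢ <;>
    obtain ⟨⟨a, b⟩, hp, rfl, rfl⟩ := h <;> obtain ⟨⟨b', c⟩, hq, hb, rfl⟩ := h'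
  · obtain rfl := ι₁_injective hb
    exact ⟨(a, c), hα.trans hp hq, rfl, rfl⟩
  · obtain rfl := ι₂_injective hb
    exact ⟨(a, c), hβ.trans hp hq, rfl, rfl⟩

theorem edgeMem_ιY_loop (lab : Bool) (y : Y) : EdgeMem α β (lab, ιY y, ιY y) := by
  cases lab
  exacts [⟨(.inr y, .inr y), hα.refl _, rfl, rfl⟩, ⟨(.inl y, .inl y), hβ.refl _, rfl, rfl⟩]

theorem exists_edgeMem_ι₀_loop (w : X ⊕ Z) : ∃ lab, EdgeMem α β (lab, ι₀ w, ι₀ w) := by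
  rcases w with x | z
  exacts [⟨false, (.inl x, .inl x), hα.refl _, rfl, rfl⟩,
    ⟨true, (.inr z, .inr z), hβ.refl _, rfl, rfl⟩]

theorem Joins.reverse {L : List (Edge X Y Z)} {u v : X ⊕ Y ⊕ Z} (h : Joins α β L u v) :
    Joins α β (L.reverse.map fun e => (e.1, e.2.2, e.2.1)) v u := by
  obtain ⟨hL, hh, hl⟩ := h
  obtain ⟨hne, hmem, hch⟩ := isConnSeq_iff.mp hL
  refine ⟨isConnSeq_iff.mpr ⟨by simp [hne], ?_, ?_⟩, ?_, ?_⟩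
  · simp only [List.mem_map, List.mem_reverse]
    rintro _ ⟨e, he, rfl⟩
    exact (hmem e he).symm hα hβ
  · rw [List.isChain_map, List.isChain_reverse]
    exact hch.imp fun _ _ ⟨hlab, hv⟩ => ⟨Ne.symm hlab, hv.symm⟩
  · simpa [Option.map_map] using hl
  · simpa [Option.map_map] using hh

theorem Joins.exists_of_step {u v w : X ⊕ Y ⊕ Z} {L : List (Edge X Y Z)} (h : step α β u v)
    (hL : Joins α β L v w) : ∃ L', Joins α β L' u w := by
  obtain ⟨lab, he⟩ := step_iff_exists_edgeMem.mp h
  obtain ⟨⟨lab', v', v''⟩, M, rfl⟩ := List.exists_cons_of_ne_nil hL.1.1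
  obtain rfl : v' = v := hL.source_head
  by_cases hlab : lab = lab'
  · -- consecutive edges of the same equivalence relation merge into one
    subst hlab
    have he' := he.trans hα hβ (hL.1.2.1 _ (List.mem_cons_self ..))
    cases M with
    | nil => exact ⟨_, joins_singleton_iff.mpr ⟨he', rfl, (joins_singleton_iff.mp hL).2.2⟩⟩
    | cons g N =>
      obtain ⟨-, hlab, -, hM⟩ := joins_cons_cons_iff.mp hL
      exact ⟨_, joins_cons_cons_iff.mpr ⟨he', hlab, rfl, hM⟩⟩
  · exact ⟨_, joins_cons_cons_iff.mpr ⟨he, hlab, rfl, hL⟩⟩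

theorem exists_joins_of_reflTransGen {u v : X ⊕ Y ⊕ Z}
    (h : Relation.ReflTransGen (step α β) u v) : u = v ∨ ∃ L, Joins α β L u v := by
  induction h using Relation.ReflTransGen.head_induction_on with
  | refl => exact Or.inl rfl
  | head h _ ih =>
    refine Or.inr ?_
    rcases ih with rfl | ⟨L, hL⟩
    · obtain ⟨lab, he⟩ := step_iff_exists_edgeMem.mp h
      exact ⟨_, joins_singleton_iff.mpr ⟨he, rfl, rfl⟩⟩
    · exact hL.exists_of_step hα hβ h

theorem exists_joins_cons {lab : Bool} {u v : X ⊕ Y ⊕ Z} (he : EdgeMem α β (lab, u, v))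
    (hv : ReachesBoundary α β v) : ∃ Q b, Joins α β ((lab, u, v) :: Q) u (ι₀ b) := by
  rcases eq_ι₀_or_eq_ιY v with ⟨w, rfl⟩ | ⟨y, rfl⟩
  · exact ⟨[], w, joins_singleton_iff.mpr ⟨he, rfl, rfl⟩⟩
  obtain ⟨b, hb⟩ := hv
  obtain hyb | ⟨L, hL⟩ := exists_joins_of_reflTransGen hα hβ hb
  · exact absurd hyb (ιY_ne_ι₀ y b)
  obtain ⟨f, M, rfl⟩ := List.exists_cons_of_ne_nil hL.1.1
  by_cases hlab : lab = f.1
  · -- a loop at `y` with the other label keeps the sequence alternating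
    have hloop : Joins α β ((!lab, ιY y, ιY y) :: f :: M) (ιY y) (ι₀ b) :=
      joins_cons_cons_iff.mpr ⟨edgeMem_ιY_loop hα hβ _ y, by simp [hlab], rfl, hL⟩
    exact ⟨_, b, joins_cons_cons_iff.mpr ⟨he, by simp, rfl, hloop⟩⟩
  · exact ⟨f :: M, b, joins_cons_cons_iff.mpr ⟨he, hlab, rfl, hL⟩⟩

theorem isFrothy_iff {lab : Bool} {u v : X ⊕ Y ⊕ Z} :
    IsFrothy α β (lab, u, v) ↔ EdgeMem α β (lab, u, v) ∧ ¬ ReachesBoundary α β u := by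
  refine ⟨fun ⟨he, hnot⟩ => ⟨he, fun hu => ?_⟩, fun ⟨he, hu⟩ =>
    ⟨he, fun L a b hL heL => hu ⟨b, Joins.reflTransGen_of_mem hL heL⟩⟩⟩
  have hv : ReachesBoundary α β v :=
    hu.of_reflTransGen (.single (step_symm hα hβ (step_iff_exists_edgeMem.mpr ⟨lab, he⟩)))
  obtain ⟨Q, b, hQ⟩ := exists_joins_cons hα hβ he hv
  obtain ⟨P, a, hP⟩ := exists_joins_cons hα hβ (he.symm hα hβ) hu
  have hP' := hP.reverse hα hβ
  simp only [List.reverse_cons, List.map_append, List.map_cons, List.map_nil] at hP'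
  exact hnot _ a b (hP'.append_cons hQ) (by simp)

theorem partComp_eq_comp : partComp β α = comp β α := by
  ext ⟨a, b⟩
  simp only [partComp, comp, Set.mem_ofPred_eq, ← Relation.reflTransGen_iff_exists_fin_chain]
  refine ⟨fun h => ?_, fun ⟨L, hL⟩ => Joins.reflTransGen hL⟩
  rcases exists_joins_of_reflTransGen hα hβ h with hab | ⟨L, hL⟩
  · obtain rfl := ι₀_injective hab
    obtain ⟨lab, he⟩ := exists_edgeMem_ι₀_loop hα hβ a
    exact ⟨_, joins_singleton_iff.mpr ⟨he, rfl, rfl⟩⟩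
  · exact ⟨L, hL⟩

theorem IsFrothy.exists_mem_Yprime {lab : Bool} {u v : X ⊕ Y ⊕ Z}
    (h : IsFrothy α β (lab, u, v)) :
    (∃ y ∈ Yprime α β, u = ιY y) ∧ ∃ y' ∈ Yprime α β, v = ιY y' := by
  obtain ⟨he, hu⟩ := (isFrothy_iff hα hβ).mp h
  refine ⟨exists_mem_Yprime_of_not_reachesBoundary hu,
    exists_mem_Yprime_of_not_reachesBoundary fun hv => hu ?_⟩
  exact hv.of_reflTransGen (.single (step_iff_exists_edgeMem.mpr ⟨lab, he⟩))

theorem isFrothy_of_mem_Yprime {lab : Bool} {y : Y} {v : X ⊕ Y ⊕ Z} (hy : y ∈ Yprime α β)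
    (he : EdgeMem α β (lab, ιY y, v)) : IsFrothy α β (lab, ιY y, v) :=
  (isFrothy_iff hα hβ).mpr ⟨he, mem_Yprime_iff.mp hy⟩

theorem isFrothyCycle_loopCycle {y : Y} (hy : y ∈ Yprime α β) :
    IsFrothyCycle α β (loopCycle y) := by
  have h := fun lab => isFrothy_of_mem_Yprime hα hβ hy (edgeMem_ιY_loop hα hβ lab y)
  simp [IsFrothyCycle, isConnSeq_iff, loopCycle, h, (h _).1]

theorem isFrothyCycle_squareCycle {lab : Bool} {y y' : Y} (hy : y ∈ Yprime α β)
    (hy' : y' ∈ Yprime α β) (he : EdgeMem α β (lab, ιY y, ιY y')) :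
    IsFrothyCycle α β (squareCycle lab y y') := by
  have h := fun lab => isFrothy_of_mem_Yprime hα hβ hy (edgeMem_ιY_loop hα hβ lab y)
  have h' := fun lab => isFrothy_of_mem_Yprime hα hβ hy' (edgeMem_ιY_loop hα hβ lab y')
  have he' := he.symm hα hβ
  simp [IsFrothyCycle, isConnSeq_iff, squareCycle, h, h', (h _).1, (h' _).1, he, he',
    isFrothy_of_mem_Yprime hα hβ hy he, isFrothy_of_mem_Yprime hα hβ hy' he']

theorem frothyClass_eq_loopCycle {L : List (Edge X Y Z)} (hL : IsFrothyCycle α β L)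
    {lab : Bool} {y : Y} {v : X ⊕ Y ⊕ Z} (hy : y ∈ Yprime α β) (he : (lab, ιY y, v) ∈ L) :
    frothyClass L hL = frothyClass (loopCycle y) (isFrothyCycle_loopCycle hα hβ hy) := by
  have hfr := hL.2.2.2.2 _ he
  obtain ⟨y', hy', rfl⟩ := (hfr.exists_mem_Yprime hα hβ).2
  have hS := isFrothyCycle_squareCycle hα hβ hy hy' hfr.1
  exact (frothyClass_eq_of_mem (hL' := hS) he (by simp [squareCycle])).trans
    (frothyClass_eq_of_mem (by simp [squareCycle]) (mem_loopCycle (!lab) y))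

theorem frothyClass_loopCycle_eq_of_simRel {y y' : Y} (hy : y ∈ Yprime α β)
    (hy' : y' ∈ Yprime α β) (h : simRel α β y y') :
    frothyClass (loopCycle y) (isFrothyCycle_loopCycle hα hβ hy) =
      frothyClass (loopCycle y') (isFrothyCycle_loopCycle hα hβ hy') := by
  rw [simRel_iff_reflTransGen] at h
  induction h with
  | refl => rfl
  | @tail b c hyb hbc ih =>
    have hb := mem_Yprime_of_reflTransGen hyb hy
    obtain ⟨lab, he⟩ := step_iff_exists_edgeMem.mp (step_ιY_iff.mpr hbc)
    have hS := isFrothyCycle_squareCycle hα hβ hb hy' he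
    rw [ih hb, ← frothyClass_eq_loopCycle hα hβ hS hb (lab := lab) (v := ιY c)
      (by simp [squareCycle]), frothyClass_eq_loopCycle hα hβ hS hy' (lab := lab) (v := ιY b)
      (by simp [squareCycle])]

theorem IsFrothyCycle.exists_visit {L : List (Edge X Y Z)} (h : IsFrothyCycle α β L) :
    ∃ y ∈ Yprime α β, ∃ lab v, (lab, ιY y, v) ∈ L := by
  obtain ⟨⟨lab, u, v⟩, M, rfl⟩ := List.exists_cons_of_ne_nil h.1.1
  obtain ⟨y, hy, rfl⟩ := ((h.2.2.2.2 _ (List.mem_cons_self ..)).exists_mem_Yprime hα hβ).1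
  exact ⟨y, hy, lab, v, List.mem_cons_self ..⟩

theorem IsFrothyCycle.simRel {L : List (Edge X Y Z)} (h : IsFrothyCycle α β L)
    {lab lab' : Bool} {y y' : Y} {v v' : X ⊕ Y ⊕ Z}
    (he : (lab, ιY y, v) ∈ L) (he' : (lab', ιY y', v') ∈ L) : simRel α β y y' := by
  obtain ⟨u, hu⟩ := h.exists_joins
  have : Std.Symm (step α β) := ⟨fun _ _ => step_symm hα hβ⟩
  have hyy' : Relation.ReflTransGen (step α β) (ιY y) (ιY y') :=
    (hu.reflTransGen_of_mem he).trans (symm_of _ (hu.reflTransGen_of_mem he'))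
  have hy := ((isFrothy_iff hα hβ).mp (h.2.2.2.2 _ he)).2
  obtain ⟨y'', hy'', hyy''⟩ := exists_reflTransGen_stepY hy hyy'
  obtain rfl : y' = y'' := by simpa using hy''
  exact simRel_iff_reflTransGen.mpr hyy''

theorem pPart_eq_fPBR : pPart α β = fPBR α β := by
  choose g hg hg_visit using fun L : FrothyCycles α β => L.2.exists_visit hα hβ
  refine Nat.card_quot_eq_of_maps (s := SharesEdge α β)
    (fun y => ⟨loopCycle y.1, isFrothyCycle_loopCycle hα hβ y.2⟩) (fun L => ⟨g L, hg L⟩)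
    (fun y y' => frothyClass_loopCycle_eq_of_simRel hα hβ y.2 y'.2) ?_ ?_ ?_
  · rintro L L' ⟨⟨lab, u, v⟩, heL, heL'⟩
    obtain ⟨y, -, rfl⟩ := ((L.2.2.2.2.2 _ heL).exists_mem_Yprime hα hβ).1
    obtain ⟨_, _, hgL⟩ := hg_visit L
    obtain ⟨_, _, hgL'⟩ := hg_visit L'
    exact Quot.sound ((equivalence_simRel hα hβ).trans (L.2.simRel hα hβ hgL heL)
      (L'.2.simRel hα hβ heL' hgL'))
  · intro y
    obtain ⟨_, _, hgy⟩ := hg_visit _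
    exact Quot.sound
      ((isFrothyCycle_loopCycle hα hβ y.2).simRel hα hβ hgy (mem_loopCycle false y.1))
  · intro L
    obtain ⟨_, _, hgL⟩ := hg_visit L
    exact (frothyClass_eq_loopCycle hα hβ L.2 (hg L) hgL).symm

end Equivalences

theorem p_eq_f_and_Psi_respects_deformation_general
    (X Y Z : Type)
    (α : PBR X Y) (β : PBR Y Z)
    (hα : Equivalence fun a b : X ⊕ Y => (a, b) ∈ α)
    (hβ : Equivalence fun a b : Y ⊕ Z => (a, b) ∈ β) :
    Equivalence (fun y₁ y₂ : {y : Y // y ∈ Yprime α β} => simRel α β y₁.1 y₂.1) ∧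
    pPart α β = fPBR α β ∧
    partComp β α = comp β α :=
  ⟨(equivalence_simRel hα hβ).comap Subtype.val, pPart_eq_fPBR hα hβ, partComp_eq_comp hα hβ⟩

/-- For equivalence relations `α` on `X ⊕ Y` and `β` on `Y ⊕ Z` regarded as
PBRs, `∼` is an equivalence relation on `Y'` and `𝔭(α,β) = 𝔣((Ψ(α),Ψ(β)))`;
consequently `Ψ̄ : (α,k) ↦ (Ψ(α),k)` respects the deformed compositions. -/
theorem p_eq_f_and_Psi_respects_deformation
    (X Y Z : Type) [Fintype X] [Fintype Y] [Fintype Z]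
    (α : PBR X Y) (β : PBR Y Z)
    (hα : Equivalence fun a b : X ⊕ Y => (a, b) ∈ α)
    (hβ : Equivalence fun a b : Y ⊕ Z => (a, b) ∈ β) :
    Equivalence (fun y₁ y₂ : {y : Y // y ∈ Yprime α β} => simRel α β y₁.1 y₂.1) ∧
    pPart α β = fPBR α β ∧
    partComp β α = comp β α :=
  p_eq_f_and_Psi_respects_deformation_general X Y Z α β hα hβ

end PBRPaper
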